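/- Suppose ν < λ = λ^ν < κ ≤ 2^λ are infinite cardinals with ν and κ regular. Then SNR⁻(κ,ν,E^κ_ν) holds: for every stationary T₀ ⊆ E^κ_ν, there exists a function φ : κ → ν such that for stationarily many α ∈ T₀, there is a club c in α on which φ is strictly increasing. -/

import Mathlib

open Cardinal Set Ordinal

/-- `C` is unbounded in `α`. -/
def UnbIn (C : Set Ordinal) (α : Ordinal) : Prop :=
  ∀ β < α, ∃ γ ∈ C, β < γ ∧ γ < α

/-- `C` is closed in `α`: every nonzero limit point of `C` below `α` belongs to `C`. -/
def ClosedIn (C : Set Ordinal) (α : Ordinal) : Prop :=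
  ∀ β < α, 0 < β → UnbIn C β → β ∈ C

/-- `C` is a club (closed unbounded) subset of `α`. -/
def ClubIn (C : Set Ordinal) (α : Ordinal) : Prop :=
  C ⊆ Set.Iio α ∧ ClosedIn C α ∧ UnbIn C α

/-- `S` is stationary in `α`. -/
def StatIn (S : Set Ordinal) (α : Ordinal) : Prop :=
  ∀ C, ClubIn C α → (S ∩ C).Nonempty

/-- The trace of `S` below `κ`: ordinals of uncountable cofinality in which `S` reflects. -/
def Tr (κ : Ordinal) (S : Set Ordinal) : Set Ordinal :=
  {β | β < κ ∧ Cardinal.aleph0 < β.cof ∧ StatIn (S ∩ Set.Iio β) β}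

/-- `E^κ_θ`, the set of ordinals below `κ` of cofinality `θ`. -/
def Ecof (κ : Ordinal) (θ : Cardinal) : Set Ordinal :=
  {α | α < κ ∧ α.cof = θ}

/-- The set of accumulation points of `C` that belong to `C`. -/
def accSet (C : Set Ordinal) : Set Ordinal :=
  {β ∈ C | 0 < β ∧ UnbIn C β}

/-- The order type of a set of ordinals: the unique ordinal whose initial segment
order-embeds onto the set. -/
noncomputable def otp (x : Set Ordinal) : Ordinal :=
  sInf {o : Ordinal | ∃ f : Ordinal → Ordinal,
    StrictMonoOn f (Set.Iio o) ∧ f '' Set.Iio o = x}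

/-- The partition principle `Prt(S, θ, T)` (computed inside `κ`). -/
def Prt (κ : Ordinal) (S : Set Ordinal) (θ : Cardinal) (T : Set Ordinal) : Prop :=
  ∃ P : Ordinal → Set Ordinal,
    (∀ i < θ.ord, P i ⊆ S) ∧
    Set.PairwiseDisjoint (Set.Iio θ.ord) P ∧
    (S ⊆ ⋃ i ∈ Set.Iio θ.ord, P i) ∧
    StatIn (T ∩ ⋂ i ∈ Set.Iio θ.ord, Tr κ (P i)) κ

/-- The principle `SNR⁻(κ, ν, T)`. -/
def SNRm (κ : Ordinal) (ν : Cardinal) (T : Set Ordinal) : Prop :=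
  ∀ T₀ ⊆ T ∩ Ecof κ ν, StatIn T₀ κ →
    ∃ φ : Ordinal → Ordinal, (∀ β < κ, φ β < ν.ord) ∧
      StatIn {α ∈ T₀ | ∃ c, ClubIn c α ∧ StrictMonoOn φ c} κ

/-- The simultaneous partition principle `Prp(S, ν, T)` (computed inside `κ`). -/
def Prp (κ : Ordinal) (S : Set Ordinal) (ν : Cardinal) (T : Set Ordinal) : Prop :=
  ∀ θ : Cardinal, θ ≤ ν →
    ∀ Si : Ordinal → Set Ordinal, (∀ i < θ.ord, Si i ⊆ S) →
      ∀ T' ⊆ T ∩ ⋂ i ∈ Set.Iio θ.ord, Tr κ (Si i), StatIn T' κ →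
        ∃ I : Set Ordinal, I ⊆ Set.Iio θ.ord ∧ (∀ j < θ.ord, ∃ i ∈ I, j ≤ i) ∧
          ∃ S' : Ordinal → Set Ordinal,
            (∀ i ∈ I, S' i ⊆ Si i) ∧
            (∀ i ∈ I, StatIn (S' i) κ) ∧
            Set.PairwiseDisjoint I S' ∧
            StatIn (T' ∩ ⋂ i ∈ I, Tr κ (S' i)) κ

/-- `⟨lams, f⟩` is a scale for the singular cardinal `lam`. -/
def IsScale (lam : Cardinal) (lams : Ordinal → Cardinal) (f : Ordinal → Ordinal → Ordinal) : Prop :=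
  (∀ i < lam.ord.cof.ord, (lams i).IsRegular) ∧
  (∀ i < lam.ord.cof.ord, ∀ j < lam.ord.cof.ord, i < j → lams i < lams j) ∧
  (∀ i < lam.ord.cof.ord, lams i < lam) ∧
  (∀ c < lam, ∃ i < lam.ord.cof.ord, c < lams i) ∧
  (∀ γ < (Order.succ lam).ord, ∀ i < lam.ord.cof.ord, f γ i < (lams i).ord) ∧
  (∀ γ < (Order.succ lam).ord, ∀ δ < (Order.succ lam).ord, γ < δ →
    ∃ i < lam.ord.cof.ord, ∀ j, i ≤ j → j < lam.ord.cof.ord → f γ j < f δ j) ∧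
  (∀ g : Ordinal → Ordinal, (∀ i < lam.ord.cof.ord, g i < (lams i).ord) →
    ∃ γ < (Order.succ lam).ord, ∃ i < lam.ord.cof.ord,
      ∀ j, i ≤ j → j < lam.ord.cof.ord → g j < f γ j)

/-- `α` is a very good point of the scale `f`. -/
def VeryGoodAt (lam : Cardinal) (f : Ordinal → Ordinal → Ordinal) (α : Ordinal) : Prop :=
  ∃ C, ClubIn C α ∧ ∃ i < lam.ord.cof.ord,
    ∀ γ ∈ C, ∀ δ ∈ C, γ < δ → ∀ j, i ≤ j → j < lam.ord.cof.ord → f γ j < f δ j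

/-- The least size of a family of `θ`-sized subsets of `ν` such that every club
in `ν` contains a member of the family. -/
noncomputable def CC (ν θ : Cardinal) : Cardinal :=
  sInf { c : Cardinal | ∃ 𝒞 : Ordinal → Set Ordinal,
    (∀ i < c.ord, 𝒞 i ⊆ Set.Iio ν.ord ∧ (otp (𝒞 i)).card = θ) ∧
    ∀ b, ClubIn b ν.ord → ∃ i < c.ord, 𝒞 i ⊆ b }

/-- `𝒟(ν, μ) = cf([ν]^μ, ⊇)`: the least size of a family of `μ`-sized subsets of `ν`
such that every `μ`-sized subset of `ν` contains a member of the family. -/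
noncomputable def DD (ν μ : Cardinal) : Cardinal :=
  sInf { c : Cardinal | ∃ 𝒟 : Ordinal → Set Ordinal,
    (∀ i < c.ord, 𝒟 i ⊆ Set.Iio ν.ord ∧ (otp (𝒟 i)).card = μ) ∧
    ∀ a : Set Ordinal, a ⊆ Set.Iio ν.ord → (otp a).card = μ → ∃ i < c.ord, 𝒟 i ⊆ a }

/-!
Code each `β < κ` by a subset `X β` of `λ`, possible as `κ ≤ 2 ^ λ`. For `α ∈ T₀` fix a club
`s α` of order type `ν` in `α` and, for each pair of indices, a point of `λ` separating the codes
of the two members; these points `d α : ν × ν → λ` turn the codes along `s α` into an injective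
`ν`-sequence of subsets of `ν × ν`. The pair of `d α` and that sequence takes at most
`λ ^ ν · 2 ^ ν = λ < κ` values, so it is constant on a stationary subset of `T₀`. There the
index of `β` in `s α` can be read off `{p | d α p ∈ X β}` by a single `φ`, which is therefore
strictly increasing along every such `s α`.
-/

open Function

universe u

lemma StatIn.mono {S S' : Set Ordinal} {α : Ordinal} (hS : StatIn S α) (h : S ⊆ S') :
    StatIn S' α :=
  fun C hC => (hS C hC).mono (inter_subset_inter_left C h)

/-- Close `β` under "next element of each `C i`" `ω` times; the supremum is a limit point of
every `C i`. -/
lemma clubIn_iInter {κ : Cardinal.{u}} (hκ : κ.IsRegular) (hκ₀ : ℵ₀ < κ) {ι : Type u}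
    (hι : #ι < κ) {C : ι → Set Ordinal.{u}} (hC : ∀ i, ClubIn (C i) κ.ord) :
    ClubIn (Iio κ.ord ∩ ⋂ i, C i) κ.ord := by
  have hκlim : Order.IsSuccLimit κ.ord := isSuccLimit_ord hκ.aleph0_le
  refine ⟨inter_subset_left, fun β hβ hβ₀ hβunb => ⟨hβ, mem_iInter.2 fun i => ?_⟩, fun β hβ => ?_⟩
  · exact (hC i).2.1 β hβ hβ₀ fun γ hγ =>
      (hβunb γ hγ).imp fun δ hδ => ⟨(mem_iInter.1 hδ.1.2) i, hδ.2⟩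
  have hnext : ∀ i, ∀ γ < κ.ord, ∃ δ ∈ C i, γ < δ ∧ δ < κ.ord := fun i => (hC i).2.2
  choose! next hnext_mem hnext_gt hnext_lt using hnext
  set G : Ordinal.{u} → Ordinal.{u} := fun γ => max (γ + 1) (⨆ i, next i γ)
  have hG_gt : ∀ γ, γ < G γ := fun γ => (lt_add_one γ).trans_le (le_max_left _ _)
  have hG_lt : ∀ γ < κ.ord, G γ < κ.ord := fun γ hγ =>
    max_lt (hκlim.add_one_lt hγ)
      (iSup_lt_of_lt_cof (by rwa [hκ.cof_ord]) fun i => hnext_lt i γ hγ)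
  have hβ' : nfp G β < κ.ord := nfp_lt_ord_of_isRegular hκ hκ₀.ne' hG_lt hβ
  have hβ_lt : β < nfp G β := (hG_gt β).trans_le (iterate_le_nfp G β 1)
  refine ⟨nfp G β, ⟨hβ', mem_iInter.2 fun i => (hC i).2.1 _ hβ' (hβ_lt.trans_le' bot_le)
    fun δ hδ => ?_⟩, hβ_lt, hβ'⟩
  obtain ⟨n, hn⟩ := lt_nfp_iff.1 hδ
  have hγ : G^[n] β < κ.ord := (iterate_le_nfp G β n).trans_lt hβ'
  refine ⟨next i (G^[n] β), hnext_mem i _ hγ, hn.trans (hnext_gt i _ hγ), ?_⟩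
  calc next i (G^[n] β) ≤ G (G^[n] β) := (Ordinal.le_iSup (next · _) i).trans (le_max_right _ _)
    _ < G (G (G^[n] β)) := hG_gt _
    _ = G^[n + 2] β := by rw [iterate_succ_apply', iterate_succ_apply']
    _ ≤ nfp G β := iterate_le_nfp G β (n + 2)

lemma StatIn.exists_statIn_fiber {κ : Cardinal.{u}} (hκ : κ.IsRegular) (hκ₀ : ℵ₀ < κ)
    {S : Set Ordinal.{u}} (hS : StatIn S κ.ord) {ι : Type u} (hι : #ι < κ) (f : Ordinal.{u} → ι) :
    ∃ i, StatIn {α ∈ S | f α = i} κ.ord := by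
  by_contra! h
  simp only [StatIn, not_forall, not_nonempty_iff_eq_empty] at h
  choose C hC hdisj using h
  obtain ⟨α, hαS, -, hαC⟩ := hS _ (clubIn_iInter hκ hκ₀ hι hC)
  exact (hdisj (f α)).subset ⟨⟨hαS, rfl⟩, mem_iInter.1 hαC (f α)⟩

/-- Normalising a fundamental sequence `f` of `α` to `e ξ = sup_{η < ξ} (f η + 1)` makes it
continuous, so its range becomes closed. -/
lemma exists_strictMono_clubIn_range {α a : Ordinal.{u}} (hα : ℵ₀ ≤ α.cof)
    (ha : α.cof.ord = a) : ∃ e : Iio a → Ordinal.{u}, StrictMono e ∧ ClubIn (range e) α := by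
  obtain ⟨f, hf⟩ := exists_isFundamentalSeq ha
  have ha_lim : Order.IsSuccLimit a := ha ▸ isSuccLimit_ord hα
  set e : Iio a → Ordinal.{u} := fun ξ => ⨆ η : Iio ξ, (f η).1 + 1
  have le_e : ∀ {η ξ : Iio a}, η < ξ → (f η).1 + 1 ≤ e ξ := fun {η ξ} h =>
    Ordinal.le_iSup (fun η : Iio ξ => (f η).1 + 1) ⟨η, h⟩
  have e_le : ∀ ξ, e ξ ≤ f ξ := fun ξ =>
    Ordinal.iSup_le fun η => Order.add_one_le_iff.2 (hf.strictMono η.2)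
  have he : StrictMono e := fun ξ ζ h => (e_le ξ).trans_lt ((lt_add_one _).trans_le (le_e h))
  have he_lt : ∀ ξ, e ξ < α := fun ξ => (e_le ξ).trans_lt (f ξ).2
  have hunb : UnbIn (range e) α := by
    intro β hβ
    obtain ⟨_, ⟨η, rfl⟩, hη⟩ := hf.isCofinal_range ⟨β, hβ⟩
    let η' : Iio a := ⟨η + 1, ha_lim.add_one_lt η.2⟩
    exact ⟨e η', mem_range_self η', (show β ≤ f η from hη).trans_lt ((lt_add_one _).trans_le
      (le_e (show η < η' from Subtype.mk_lt_mk.2 (lt_add_one η.1)))), he_lt η'⟩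
  refine ⟨e, he, ⟨range_subset_iff.2 he_lt, fun β hβ _ hβunb => ?_, hunb⟩⟩
  obtain ⟨_, ⟨ξ₀, rfl⟩, hβξ₀, -⟩ := hunb β hβ
  obtain ⟨ξ, hξ, hmin⟩ := wellFounded_lt.has_min {ξ | β ≤ e ξ} ⟨ξ₀, hβξ₀.le⟩
  refine ⟨ξ, le_antisymm (Ordinal.iSup_le fun η => ?_) hξ⟩
  obtain ⟨_, ⟨ζ, rfl⟩, hηζ, hζβ⟩ := hβunb (e η) (not_le.1 fun h => hmin η h η.2)
  exact (le_e (he.lt_iff_lt.1 hηζ)).trans hζβ.le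

def pattern {B L J : Type*} (X : B → Set L) (d : J → L) (b : B) : Set J := {p | d p ∈ X b}

lemma exists_injective_pattern {B L I : Type*} [Nonempty L] {X : B → Set L} {s : I → B}
    (hs : Injective (X ∘ s)) : ∃ d : I × I → L, Injective (pattern X d ∘ s) := by
  have hsep : ∀ p : I × I, X (s p.1) ≠ X (s p.2) → ∃ l, ¬(l ∈ X (s p.1) ↔ l ∈ X (s p.2)) :=
    fun p hne => not_forall.1 (mt Set.ext hne)
  choose! d hd using hsep
  exact ⟨d, fun i j hij => hs (not_not.1 fun hne => hd (i, j) hne (Set.ext_iff.1 hij (i, j)))⟩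

lemma mk_prod_fun_set_le {I L : Type u} (hI : ℵ₀ ≤ #I) (hL : ℵ₀ ≤ #L) (hLI : #L ^ #I = #L) :
    #((I × I → L) × (I → Set (I × I))) ≤ #L := by
  have hII : #(I × I) = #I := by rw [mk_prod, Cardinal.lift_id, mul_eq_self hI]
  have hlabels : #(I × I → L) = #L := by rw [← power_def, hII, hLI]
  have hpatterns : #(I → Set (I × I)) ≤ #L :=
    calc #(I → Set (I × I)) = 2 ^ #I := by
          rw [← power_def, mk_set, hII, ← power_mul, mul_eq_self hI]
      _ ≤ #L ^ #I := power_le_power_right (two_le_iff_one_lt.2 (one_lt_aleph0.trans_le hL))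
      _ = #L := hLI
  calc #((I × I → L) × (I → Set (I × I))) = #(I × I → L) * #(I → Set (I × I)) := by
        rw [mk_prod, Cardinal.lift_id, Cardinal.lift_id]
    _ ≤ #L * #L := by rw [hlabels]; gcongr
    _ = #L := mul_eq_self hL

lemma exists_injOn_Iio_ord {κ : Cardinal.{u}} {L : Type u} (h : κ ≤ 2 ^ #L) :
    ∃ X : Ordinal.{u} → Set L, InjOn X (Iio κ.ord) := by
  obtain ⟨J⟩ : Nonempty (Iio κ.ord ↪ Set L) := by
    rw [← lift_mk_le', Cardinal.mk_Iio_ordinal, card_ord, Cardinal.lift_lift, mk_set,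
      Cardinal.lift_le]
    exact h
  refine ⟨extend Subtype.val J fun _ => ∅, fun β hβ γ hγ h => ?_⟩
  rw [show β = (⟨β, hβ⟩ : Iio κ.ord).1 from rfl, show γ = (⟨γ, hγ⟩ : Iio κ.ord).1 from rfl,
    Subtype.val_injective.extend_apply, Subtype.val_injective.extend_apply] at h
  exact congrArg Subtype.val (J.injective h)

theorem statement18_general (ν lam κ : Cardinal) (hν : ν.IsRegular) (hκ : κ.IsRegular)
    (hlam : Cardinal.aleph0 ≤ lam)
    (h2 : lam ^ ν = lam) (h3 : lam < κ) (h4 : κ ≤ 2 ^ lam) :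
    SNRm κ.ord ν (Ecof κ.ord ν) := by
  intro T₀ hT₀ hT₀stat
  let I := ν.ord.ToType
  let L := lam.out
  have hI : #I = ν := by rw [mk_toType, card_ord]
  have hL : #L = lam := mk_out lam
  have : Nonempty I := mk_ne_zero_iff.1 (hI ▸ (aleph0_pos.trans_le hν.aleph0_le).ne')
  have : Nonempty L := mk_ne_zero_iff.1 (hL ▸ (aleph0_pos.trans_le hlam).ne')
  obtain ⟨X, hX⟩ := exists_injOn_Iio_ord (L := L) (hL ▸ h4)
  have hseq : ∀ α ∈ T₀, ∃ s : I → Ordinal, StrictMono s ∧ ClubIn (range s) α := by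
    intro α hα
    have hcof := (hT₀ hα).2.2
    obtain ⟨e, he, hclub⟩ :=
      exists_strictMono_clubIn_range (hcof ▸ hν.aleph0_le) (congrArg ord hcof)
    exact ⟨e ∘ ToType.mk.symm, he.comp ToType.mk.symm.strictMono, by rwa [EquivLike.range_comp]⟩
  choose! s hs using hseq
  have hsep : ∀ α ∈ T₀, ∃ d : I × I → L, Injective (pattern X d ∘ s α) := by
    intro α hα
    have hsκ : ∀ i, s α i < κ.ord :=
      fun i => ((hs α hα).2.1 (mem_range_self i)).trans (hT₀ hα).2.1
    exact exists_injective_pattern fun i j h => (hs α hα).1.injective (hX (hsκ i) (hsκ j) h)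
  choose! d hd using hsep
  have hcodes : #((I × I → L) × (I → Set (I × I))) < κ :=
    (mk_prod_fun_set_le (hI ▸ hν.aleph0_le) (hL ▸ hlam) (by rw [hI, hL, h2])).trans_lt (hL ▸ h3)
  obtain ⟨D, hD⟩ := hT₀stat.exists_statIn_fiber hκ (hlam.trans_lt h3) hcodes
    fun α => (d α, pattern X (d α) ∘ s α)
  refine ⟨fun β => (ToType.mk.symm (invFun D.2 (pattern X D.1 β))).1,
    fun β _ => (ToType.mk.symm _).2, hD.mono ?_⟩
  rintro α ⟨hα, rfl⟩
  have hdecode : ∀ i, invFun (pattern X (d α) ∘ s α) (pattern X (d α) (s α i)) = i :=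
    leftInverse_invFun (hd α hα)
  refine ⟨hα, range (s α), (hs α hα).2, ?_⟩
  rintro _ ⟨i, rfl⟩ _ ⟨j, rfl⟩ hij
  simp only [hdecode]
  exact ToType.mk.symm.strictMono ((hs α hα).1.lt_iff_lt.1 hij)

theorem statement18 (ν lam κ : Cardinal) (hν : ν.IsRegular) (hκ : κ.IsRegular)
    (hlam : Cardinal.aleph0 ≤ lam)
    (h1 : ν < lam) (h2 : lam ^ ν = lam) (h3 : lam < κ) (h4 : κ ≤ 2 ^ lam) :
    SNRm κ.ord ν (Ecof κ.ord ν) :=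
  statement18_general ν lam κ hν hκ hlam h2 h3 h4
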